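/- arXiv:math/0004052 — 5 statements merged into one kernel-verified Lean document; each statement's English description precedes it below -/
import Mathlib

section
/- Let Ω be a compact Hausdorff space and Γ a group acting on Ω by homeomorphisms. Suppose that for any nonempty open subsets U₁, …, Uₙ of Ω there exist g₁, …, gₙ ∈ Γ such that g₁U₁ ∪ ⋯ ∪ gₙUₙ = Ω. Then for any nonnegative continuous functions b₁, …, bₙ : Ω → ℝ with ‖bⱼ‖ = 1 and any ε > 0, there exist g₁, …, gₙ ∈ Γ such that for every ω ∈ Ω, the sum ∑ⱼ bⱼ(gⱼ⁻¹ ω) ≥ 1 − ε. -/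
/-!
With `r = max (1 - ε) 0 < 1 = ‖bⱼ‖`, each superlevel set `{bⱼ > r}` is a nonempty open set, so
some translates `gⱼ {bⱼ > r}` cover `Ω`; at `ω ∈ gⱼ {bⱼ > r}` the `j`-th summand alone exceeds `r`.
-/

open Pointwise Set

theorem ContinuousMap.exists_lt_apply_of_lt_norm {X : Type*} [TopologicalSpace X] [CompactSpace X]
    {f : C(X, ℝ)} (hf : 0 ≤ f) {r : ℝ} (hr0 : 0 ≤ r) (hr : r < ‖f‖) : ∃ x, r < f x := by
  by_contra! h
  refine hr.not_ge ((f.norm_le hr0).mpr fun x => ?_)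
  exact (Real.norm_of_nonneg (ContinuousMap.le_def.mp hf x)).trans_le (h x)

theorem lt_sum_inv_smul_of_iUnion_smul_superlevel_eq_univ {ι Ω Γ : Type*} [Fintype ι] [Group Γ]
    [MulAction Γ Ω] {f : ι → Ω → ℝ} (hf : ∀ j ω, 0 ≤ f j ω) {r : ℝ} {g : ι → Γ}
    (hg : ⋃ j, g j • (f j ⁻¹' Ioi r) = univ) (ω : Ω) : r < ∑ j, f j ((g j)⁻¹ • ω) := by
  obtain ⟨j, hj⟩ := mem_iUnion.mp (hg ▸ mem_univ ω)
  calc r < f j ((g j)⁻¹ • ω) := mem_smul_set_iff_inv_smul_mem.mp hj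
    _ ≤ ∑ k, f k ((g k)⁻¹ • ω) :=
      Finset.single_le_sum (f := fun k => f k ((g k)⁻¹ • ω)) (fun k _ => hf k _) (Finset.mem_univ j)

theorem stmt0_general {Ω Γ : Type*} [TopologicalSpace Ω] [CompactSpace Ω]
    [Group Γ] [MulAction Γ Ω] (n : ℕ)
    (hfill : ∀ U : Fin n → Set Ω, (∀ j, IsOpen (U j)) → (∀ j, (U j).Nonempty) →
      ∃ g : Fin n → Γ, (⋃ j, g j • U j) = Set.univ)
    (b : Fin n → C(Ω, ℝ)) (hb0 : ∀ j, 0 ≤ b j) (hb1 : ∀ j, ‖b j‖ = 1)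
    (ε : ℝ) (hε : 0 < ε) :
    ∃ g : Fin n → Γ, ∀ ω : Ω, 1 - ε ≤ ∑ j, b j ((g j)⁻¹ • ω) := by
  set r := max (1 - ε) 0
  have hr1 : r < 1 := max_lt (by linarith) one_pos
  obtain ⟨g, hg⟩ := hfill (fun j => b j ⁻¹' Ioi r) (fun j => isOpen_Ioi.preimage (b j).continuous)
    fun j => (b j).exists_lt_apply_of_lt_norm (hb0 j) (le_max_right _ _) (hb1 j ▸ hr1)
  exact ⟨g, fun ω => (le_max_left _ _).trans
    (lt_sum_inv_smul_of_iUnion_smul_superlevel_eq_univ (fun j => hb0 j) hg ω).le⟩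

theorem stmt0 {Ω Γ : Type*} [TopologicalSpace Ω] [CompactSpace Ω] [T2Space Ω] [Infinite Ω]
    [Group Γ] [MulAction Γ Ω] [ContinuousConstSMul Γ Ω] (n : ℕ)
    (hfill : ∀ U : Fin n → Set Ω, (∀ j, IsOpen (U j)) → (∀ j, (U j).Nonempty) →
      ∃ g : Fin n → Γ, (⋃ j, g j • U j) = Set.univ)
    (b : Fin n → C(Ω, ℝ)) (hb0 : ∀ j, 0 ≤ b j) (hb1 : ∀ j, ‖b j‖ = 1)
    (ε : ℝ) (hε : 0 < ε) :
    ∃ g : Fin n → Γ, ∀ ω : Ω, 1 - ε ≤ ∑ j, b j ((g j)⁻¹ • ω) :=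
  stmt0_general n hfill b hb0 hb1 ε hε
end

section
/- Let Ω be a compact Hausdorff space and Γ a group acting on Ω by homeomorphisms. Suppose that for all nonnegative continuous functions b₁, …, bₙ : Ω → ℝ with sup norm 1 and all ε > 0, there exist g₁, …, gₙ ∈ Γ with ∑ⱼ bⱼ(gⱼ⁻¹ω) ≥ 1 − ε for all ω ∈ Ω. Then for any nonempty open subsets U₁, …, Uₙ of Ω there exist g₁, …, gₙ ∈ Γ such that g₁U₁ ∪ ⋯ ∪ gₙUₙ = Ω. -/
/-! Urysohn bumps `bⱼ` supported in `Uⱼ` with `‖bⱼ‖ = 1` are fed to the hypothesis with `ε = 1/2`.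
At every `ω` the sum `∑ⱼ bⱼ(gⱼ⁻¹ω)` is then positive, so some `gⱼ⁻¹ω` lies in the support of `bⱼ`,
hence in `Uⱼ`. -/

open Pointwise Set unitInterval

theorem ContinuousMap.exists_nonneg_norm_eq_one_support_subset {X : Type*} [TopologicalSpace X]
    [CompactSpace X] [CompletelyRegularSpace X] {U : Set X} (hU : IsOpen U) (hne : U.Nonempty) :
    ∃ f : C(X, ℝ), 0 ≤ f ∧ ‖f‖ = 1 ∧ Function.support f ⊆ U := by
  obtain ⟨x, hx⟩ := hne
  obtain ⟨f, hf, hfx, hfU⟩ := CompletelyRegularSpace.completely_regular_isOpen x U hU hx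
  let b : C(X, ℝ) := ⟨fun y => σ (f y), by fun_prop⟩
  have hb_mem (y : X) : b y ∈ I := (σ (f y)).2
  have hbx : b x = 1 := by simp [b, hfx]
  refine ⟨b, fun y => (hb_mem y).1, le_antisymm ?_ ?_, fun y hy => ?_⟩
  · refine (ContinuousMap.norm_le _ zero_le_one).2 fun y => ?_
    rw [Real.norm_of_nonneg (hb_mem y).1]
    exact (hb_mem y).2
  · simpa [hbx] using b.norm_coe_le_norm x
  · by_contra hyU
    exact hy (by simp [b, hfU hyU])

theorem iUnion_smul_eq_univ_of_sum_ne_zero {Ω Γ ι : Type*} [Group Γ] [MulAction Γ Ω]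
    [Fintype ι] {U : ι → Set Ω} (b : ι → Ω → ℝ) (hbU : ∀ j, Function.support (b j) ⊆ U j)
    (g : ι → Γ) (hsum : ∀ ω, ∑ j, b j ((g j)⁻¹ • ω) ≠ 0) : ⋃ j, g j • U j = univ := by
  refine eq_univ_of_forall fun ω => mem_iUnion.2 ?_
  obtain ⟨j, -, hj⟩ := Finset.exists_ne_zero_of_sum_ne_zero (hsum ω)
  exact ⟨j, mem_smul_set_iff_inv_smul_mem.2 (hbU j hj)⟩

theorem stmt1_general {Ω Γ : Type*} [TopologicalSpace Ω] [CompactSpace Ω] [T2Space Ω]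
    [Group Γ] [MulAction Γ Ω] (n : ℕ)
    (h : ∀ b : Fin n → C(Ω, ℝ), (∀ j, 0 ≤ b j) → (∀ j, ‖b j‖ = 1) →
      ∀ ε : ℝ, 0 < ε → ∃ g : Fin n → Γ, ∀ ω : Ω, 1 - ε ≤ ∑ j, b j ((g j)⁻¹ • ω))
    (U : Fin n → Set Ω) (hUopen : ∀ j, IsOpen (U j)) (hUne : ∀ j, (U j).Nonempty) :
    ∃ g : Fin n → Γ, (⋃ j, g j • U j) = Set.univ := by
  choose b hb_nonneg hb_norm hbU using fun j =>
    ContinuousMap.exists_nonneg_norm_eq_one_support_subset (hUopen j) (hUne j)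
  obtain ⟨g, hg⟩ := h b hb_nonneg hb_norm (1 / 2) one_half_pos
  exact ⟨g, iUnion_smul_eq_univ_of_sum_ne_zero (fun j => b j) hbU g fun ω =>
    (lt_of_lt_of_le (by norm_num) (hg ω)).ne'⟩

theorem stmt1 {Ω Γ : Type*} [TopologicalSpace Ω] [CompactSpace Ω] [T2Space Ω]
    [Group Γ] [MulAction Γ Ω] [ContinuousConstSMul Γ Ω] (n : ℕ)
    (h : ∀ b : Fin n → C(Ω, ℝ), (∀ j, 0 ≤ b j) → (∀ j, ‖b j‖ = 1) →
      ∀ ε : ℝ, 0 < ε → ∃ g : Fin n → Γ, ∀ ω : Ω, 1 - ε ≤ ∑ j, b j ((g j)⁻¹ • ω))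
    (U : Fin n → Set Ω) (hUopen : ∀ j, IsOpen (U j)) (hUne : ∀ j, (U j).Nonempty) :
    ∃ g : Fin n → Γ, (⋃ j, g j • U j) = Set.univ :=
  stmt1_general n h U hUopen hUne
end

section
/- Let Γ act on a topological space Ω by homeomorphisms, and suppose the action is topologically transitive: for any nonempty open sets V, W there exists g ∈ Γ with V ∩ gW ≠ ∅. If for each nonempty open subset U of Ω there exist t₁, …, tₙ ∈ Γ with t₁U ∪ ⋯ ∪ tₙU = Ω, then for any nonempty open subsets U₁, …, Uₙ of Ω there exist g₁, …, gₙ ∈ Γ with g₁U₁ ∪ ⋯ ∪ gₙUₙ = Ω. -/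
/-!
By topological transitivity, finitely many nonempty open sets `U₁, …, Uₙ` can be translated so
that `a₁U₁ ∩ ⋯ ∩ aₙUₙ` is a nonempty open set; add one `Uⱼ` at a time, each time moving it onto
the open set already obtained. Some `n` translates `t₁, …, tₙ` of this intersection cover `Ω`, and
`tⱼ(a₁U₁ ∩ ⋯ ∩ aₙUₙ) ⊆ (tⱼaⱼ)Uⱼ`.
-/

open Pointwise Set MulAction

theorem exists_inter_iInter_smul_nonempty (G : Type*) {α : Type*} [TopologicalSpace α] [Group G]
    [MulAction G α] [ContinuousConstSMul G α] [IsTopologicallyTransitive G α] :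
    ∀ {n : ℕ} (U : Fin n → Set α), (∀ j, IsOpen (U j)) → (∀ j, (U j).Nonempty) →
      ∀ {V : Set α}, IsOpen V → V.Nonempty → ∃ a : Fin n → G, (V ∩ ⋂ j, a j • U j).Nonempty
  | 0, _, _, _, _, _, hV => ⟨finZeroElim, by simpa using hV⟩
  | n + 1, U, hUo, hUne, V, hVo, hV => by
    obtain ⟨a, ha⟩ := exists_inter_iInter_smul_nonempty G (fun j => U j.succ)
      (fun j => hUo j.succ) (fun j => hUne j.succ) hVo hV
    have hWo : IsOpen (V ∩ ⋂ j, a j • U j.succ) :=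
      hVo.inter (isOpen_iInter_of_finite fun j => (hUo j.succ).smul (a j))
    obtain ⟨g, x, hxU, hxV, hxW⟩ := IsTopologicallyTransitive.exists_smul_inter (M := G)
      (hUo 0) (hUne 0) hWo ha
    refine ⟨Fin.cons g a, x, hxV, mem_iInter.2 (Fin.cases ?_ fun j => ?_)⟩
    · simpa using hxU
    · simpa using mem_iInter.1 hxW j

theorem iUnion_mul_smul_eq_univ {M α ι : Type*} [Monoid M] [MulAction M α]
    {t a : ι → M} {U : ι → Set α} (h : ⋃ j, t j • ⋂ i, a i • U i = univ) :
    ⋃ j, (t j * a j) • U j = univ :=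
  univ_subset_iff.1 <| h ▸ iUnion_mono fun j => by
    rw [mul_smul]
    exact smul_set_mono (iInter_subset _ j)

theorem stmt2 {Ω Γ : Type*} [TopologicalSpace Ω] [Group Γ] [MulAction Γ Ω]
    [ContinuousConstSMul Γ Ω] (n : ℕ)
    (htrans : ∀ V W : Set Ω, IsOpen V → V.Nonempty → IsOpen W → W.Nonempty →
      ∃ g : Γ, (V ∩ g • W).Nonempty)
    (hU : ∀ U : Set Ω, IsOpen U → U.Nonempty →
      ∃ t : Fin n → Γ, (⋃ j, t j • U) = Set.univ)
    (U : Fin n → Set Ω) (hUopen : ∀ j, IsOpen (U j)) (hUne : ∀ j, (U j).Nonempty) :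
    ∃ g : Fin n → Γ, (⋃ j, g j • U j) = Set.univ := by
  have : IsTopologicallyTransitive Γ Ω := ⟨fun hVo hV hWo hW => by
    simpa only [inter_comm] using htrans _ _ hWo hW hVo hV⟩
  rcases isEmpty_or_nonempty Ω with hΩ | hΩ
  · exact ⟨1, eq_univ_of_forall hΩ.elim⟩
  obtain ⟨a, ha⟩ := exists_inter_iInter_smul_nonempty Γ U hUopen hUne isOpen_univ univ_nonempty
  rw [univ_inter] at ha
  obtain ⟨t, ht⟩ := hU _ (isOpen_iInter_of_finite fun j => (hUopen j).smul (a j)) ha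
  exact ⟨t * a, iUnion_mul_smul_eq_univ ht⟩
end

section
/- Let Ω be a compact Hausdorff space and let Γ act minimally on Ω by homeomorphisms. Suppose there exist g ∈ Γ, a point x ∈ Ω with gx = x, and an open neighbourhood V of x such that for every open neighbourhood W of x there is N with gᵐV ⊆ W for all m ≥ N. Then there exists an integer n ≥ 1 such that for all nonempty open subsets U₁, …, Uₙ of Ω there exist t₁, …, tₙ ∈ Γ with t₁U₁ ∪ ⋯ ∪ tₙUₙ = Ω. -/
/-!
Translates of `V` cover the compact space `Ω`, so finitely many, say `n`, already do. Given
nonempty open `U₁, …, Uₙ`, each `Uⱼ` meets the dense orbit of `x`, so some translate `tⱼ • Uⱼ`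
is a neighbourhood of `x` and hence contains `gᵐ • V` for one large `m` common to all `j`.
Moving the `n` translates of `V` that cover `Ω` by `g⁻ᵐ` and then into the `Uⱼ` shows that
`n` translates of the `Uⱼ` cover `Ω`.
-/

open Pointwise Set Filter Topology MulAction

section Covering

variable {G α ι : Type*} [Group G] [MulAction G α]

theorem iUnion_smul_eq_univ_of_subset_smul {c t : ι → G} {A : Set α} {B : ι → Set α}
    (hc : ⋃ j, c j • A = univ) (hAB : ∀ j, A ⊆ t j • B j) :
    ⋃ j, (c j * t j) • B j = univ :=
  eq_univ_of_univ_subset <| hc ▸ iUnion_mono fun j => by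
    rw [mul_smul]
    exact smul_set_mono (hAB j)

variable (G) [TopologicalSpace α] [IsMinimal G α] [ContinuousConstSMul G α]

theorem exists_fin_iUnion_smul_eq_univ [CompactSpace α] {V : Set α} (hVo : IsOpen V)
    (hne : V.Nonempty) : ∃ n, 1 ≤ n ∧ ∃ c : Fin n → G, ⋃ j, c j • V = univ := by
  obtain ⟨I, hI⟩ := isCompact_univ.exists_finite_cover_smul G hVo hne
  have hcover : ⋃ j, (I.equivFin.symm j : G) • V = univ := by
    rw [I.equivFin.symm.surjective.iUnion_comp (fun g : I => (g : G) • V), iUnion_subtype]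
    exact eq_univ_of_univ_subset hI
  refine ⟨I.card, Finset.card_pos.2 ?_, _, hcover⟩
  obtain ⟨g, hg, -⟩ := mem_iUnion₂.1 (hI (mem_univ hne.some))
  exact ⟨g, hg⟩

theorem exists_eventually_subset_smul_of_tendsto_smallSets {l : Filter ι} {A : ι → Set α}
    {x : α} (hA : Tendsto A l (𝓝 x).smallSets) {U : Set α} (hUo : IsOpen U)
    (hne : U.Nonempty) : ∃ t : G, ∀ᶠ i in l, A i ⊆ t • U := by
  obtain ⟨h, hhx⟩ := hUo.exists_smul_mem G x hne
  have hnhds : h⁻¹ • U ∈ 𝓝 x :=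
    (hUo.smul _).mem_nhds (mem_inv_smul_set_iff.2 hhx)
  exact ⟨h⁻¹, tendsto_smallSets_iff.1 hA _ hnhds⟩

theorem exists_eventually_forall_subset_smul_of_tendsto_smallSets {κ : Type*} [Finite κ]
    {l : Filter ι} {A : ι → Set α} {x : α} (hA : Tendsto A l (𝓝 x).smallSets)
    {U : κ → Set α} (hUo : ∀ j, IsOpen (U j)) (hne : ∀ j, (U j).Nonempty) :
    ∃ t : κ → G, ∀ᶠ i in l, ∀ j, A i ⊆ t j • U j := by
  choose t ht using fun j =>
    exists_eventually_subset_smul_of_tendsto_smallSets G hA (hUo j) (hne j)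
  exact ⟨t, eventually_all.2 ht⟩

end Covering

theorem stmt3_general {Ω Γ : Type*} [TopologicalSpace Ω] [CompactSpace Ω]
    [Group Γ] [MulAction Γ Ω] [ContinuousConstSMul Γ Ω]
    (hmin : ∀ x : Ω, Dense (MulAction.orbit Γ x))
    (g : Γ) (x : Ω) (V : Set Ω) (hVopen : IsOpen V) (hxV : x ∈ V)
    (hattr : ∀ W : Set Ω, W ∈ nhds x → ∃ N : ℕ, ∀ m ≥ N, (g ^ m) • V ⊆ W) :
    ∃ n : ℕ, 1 ≤ n ∧ ∀ U : Fin n → Set Ω, (∀ j, IsOpen (U j)) → (∀ j, (U j).Nonempty) →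
      ∃ t : Fin n → Γ, (⋃ j, t j • U j) = Set.univ := by
  have : IsMinimal Γ Ω := ⟨hmin⟩
  obtain ⟨n, hn, c, hc⟩ := exists_fin_iUnion_smul_eq_univ Γ hVopen ⟨x, hxV⟩
  refine ⟨n, hn, fun U hUo hUne => ?_⟩
  have hshrink : Tendsto (fun m => g ^ m • V) atTop (𝓝 x).smallSets :=
    tendsto_smallSets_iff.2 fun W hW => eventually_atTop.2 (hattr W hW)
  obtain ⟨t, ht⟩ :=
    exists_eventually_forall_subset_smul_of_tendsto_smallSets Γ hshrink hUo hUne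
  obtain ⟨m, hm⟩ := ht.exists
  refine ⟨_, iUnion_smul_eq_univ_of_subset_smul (t := fun j => (g ^ m)⁻¹ * t j) hc fun j => ?_⟩
  rw [mul_smul, ← smul_set_subset_iff_subset_inv_smul_set]
  exact hm j

theorem stmt3 {Ω Γ : Type*} [TopologicalSpace Ω] [CompactSpace Ω] [T2Space Ω]
    [Group Γ] [MulAction Γ Ω] [ContinuousConstSMul Γ Ω]
    (hmin : ∀ x : Ω, Dense (MulAction.orbit Γ x))
    (g : Γ) (x : Ω) (hgx : g • x = x) (V : Set Ω) (hVopen : IsOpen V) (hxV : x ∈ V)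
    (hattr : ∀ W : Set Ω, W ∈ nhds x → ∃ N : ℕ, ∀ m ≥ N, (g ^ m) • V ⊆ W) :
    ∃ n : ℕ, 1 ≤ n ∧ ∀ U : Fin n → Set Ω, (∀ j, IsOpen (U j)) → (∀ j, (U j).Nonempty) →
      ∃ t : Fin n → Γ, (⋃ j, t j • U j) = Set.univ :=
  stmt3_general hmin g x V hVopen hxV hattr
end

section
/- Let Ω be a compact Hausdorff space with a minimal action of a group Γ, and suppose Ω = O₁ ∪ ⋯ ∪ O_k with each O_j open, together with points ω_j ∈ Ω and elements u_j ∈ Γ such that u_j⁻¹ attracts O_j towards ω_j (for every compact G ⊆ O_j and every neighbourhood W of ω_j there is N with u_j⁻ᵐ G ⊆ W for all m ≥ N). Then for any nonempty open subsets U₁, …, U_k of Ω there exist t₁, …, t_k ∈ Γ with t₁U₁ ∪ ⋯ ∪ t_kU_k = Ω. -/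
/-! Shrink the cover to compact sets `Kⱼ ⊆ Oⱼ`. Minimality moves `ωⱼ` into `Uⱼ` by some `g`,
so `g⁻¹ • Uⱼ` is a neighbourhood of `ωⱼ`; a power of `uⱼ⁻¹` pushes `Kⱼ` into it, i.e. some
translate of `Uⱼ` contains `Kⱼ`, and these translates cover `Ω`. -/

open Pointwise

section

open Set Topology MulAction

variable {Ω Γ : Type*} [TopologicalSpace Ω] [Group Γ] [MulAction Γ Ω]

theorem exists_smul_subset_of_dense_orbit [ContinuousConstSMul Γ Ω] {K U : Set Ω} {ω : Ω}
    (hω : Dense (orbit Γ ω)) (hK : ∀ W ∈ 𝓝 ω, ∃ g : Γ, g • K ⊆ W)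
    (hU : IsOpen U) (hUne : U.Nonempty) : ∃ g : Γ, g • K ⊆ U := by
  obtain ⟨_, ⟨h, rfl⟩, hhω⟩ := hω.exists_mem_open hU hUne
  have hnhds : h⁻¹ • U ∈ 𝓝 ω :=
    (hU.smul h⁻¹).mem_nhds (mem_smul_set_iff_inv_smul_mem.2 (by simpa using hhω))
  obtain ⟨g, hg⟩ := hK _ hnhds
  exact ⟨h * g, by rwa [mul_smul, smul_set_subset_iff_subset_inv_smul_set]⟩

theorem exists_iUnion_smul_eq_univ [CompactSpace Ω] [NormalSpace Ω] {ι : Type*} [Finite ι]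
    {O U : ι → Set Ω} (hO : ∀ j, IsOpen (O j)) (hcover : ⋃ j, O j = univ)
    (hmove : ∀ j, ∀ K ⊆ O j, IsCompact K → ∃ g : Γ, g • K ⊆ U j) :
    ∃ t : ι → Γ, ⋃ j, t j • U j = univ := by
  obtain ⟨v, hv, -, hvO⟩ := exists_iUnion_eq_closure_subset hO (fun _ => toFinite _) hcover
  choose g hg using fun j => hmove j _ (hvO j) isClosed_closure.isCompact
  refine ⟨fun j => (g j)⁻¹, eq_univ_of_univ_subset (hv ▸ iUnion_mono fun j => ?_)⟩
  exact subset_closure.trans (smul_set_subset_iff_subset_inv_smul_set.1 (hg j))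

end

theorem stmt14 {Ω Γ : Type*} [TopologicalSpace Ω] [CompactSpace Ω] [T2Space Ω]
    [Group Γ] [MulAction Γ Ω] [ContinuousConstSMul Γ Ω]
    (hmin : ∀ x : Ω, Dense (MulAction.orbit Γ x))
    (k : ℕ) (O : Fin k → Set Ω) (hOopen : ∀ j, IsOpen (O j))
    (hcover : (⋃ j, O j) = Set.univ)
    (ω : Fin k → Ω) (u : Fin k → Γ)
    (hattr : ∀ j, ∀ G : Set Ω, G ⊆ O j → IsCompact G →
      ∀ W ∈ nhds (ω j), ∃ N : ℕ, ∀ m ≥ N, ((u j)⁻¹) ^ m • G ⊆ W)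
    (U : Fin k → Set Ω) (hUopen : ∀ j, IsOpen (U j)) (hUne : ∀ j, (U j).Nonempty) :
    ∃ t : Fin k → Γ, (⋃ j, t j • U j) = Set.univ := by
  refine exists_iUnion_smul_eq_univ hOopen hcover fun j K hKO hK => ?_
  refine exists_smul_subset_of_dense_orbit (hmin (ω j)) (fun W hW => ?_) (hUopen j) (hUne j)
  obtain ⟨N, hN⟩ := hattr j K hKO hK W hW
  exact ⟨(u j)⁻¹ ^ N, hN N le_rfl⟩
end
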